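/- Let f : ℝ^m → ℂ be a Schwartz function, let p : ℝ^m → ℝ^k be a polynomial map, and let u : ℝ^k → ℂ be a smooth compactly supported function. For α ∈ ℤ^k set f_α(x) = f(x)·u(p(x) - α). Then for every N ≥ 0 the sum Σ_{α ∈ ℤ^k} sup_{x ∈ ℝ^m} (1+|x|)^N |f_α(x)| is finite. -/
import Mathlib


open SchwartzMap

private lemma coord_le_norm' {k : ℕ} (y : EuclideanSpace ℝ (Fin k)) (j : Fin k) :
    |y j| ≤ ‖y‖ := by
  rw [EuclideanSpace.norm_eq, ← Real.sqrt_sq (abs_nonneg (y j))]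
  apply Real.sqrt_le_sqrt
  have h : |y j| ^ 2 = ‖y j‖ ^ 2 := by rw [Real.norm_eq_abs]
  rw [h]
  exact Finset.single_le_sum (f := fun i => ‖y i‖ ^ 2) (fun i _ => by positivity)
    (Finset.mem_univ j)

private lemma summable_gz' : Summable fun n : ℤ => ((1 + |(n : ℝ)|) ^ 2)⁻¹ := by
  have hnat : Summable fun n : ℕ => ((1 + (n : ℝ)) ^ 2)⁻¹ := by
    have h0 : Summable fun n : ℕ => 1 / (n : ℝ) ^ 2 :=
      Real.summable_one_div_nat_pow.mpr one_lt_two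
    have := (summable_nat_add_iff 1).mpr h0
    refine this.congr fun n => ?_
    push_cast
    rw [one_div]
    ring_nf
  apply Summable.of_nat_of_neg
  · refine hnat.congr fun n => ?_
    simp
  · refine hnat.congr fun n => ?_
    simp

private lemma summable_pi_prod' (g : ℤ → ℝ) (hg : Summable g) (hg0 : ∀ n, 0 ≤ g n) :
    ∀ k : ℕ, Summable fun α : Fin k → ℤ => ∏ j, g (α j) := by
  intro k
  induction k with
  | zero =>
      haveI : Unique (Fin 0 → ℤ) := Pi.uniqueOfIsEmpty _
      exact Summable.of_finite
  | succ k h =>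
      have h2 : Summable fun q : ℤ × (Fin k → ℤ) => g q.1 * ∏ j, g (q.2 j) :=
        Summable.mul_of_nonneg (f := g) (g := fun β : Fin k → ℤ => ∏ j, g (β j)) hg h
          (Pi.le_def.mpr hg0)
          (Pi.le_def.mpr fun β => Finset.prod_nonneg fun j _ => hg0 _)
      refine (Fin.consEquiv (fun _ : Fin (k + 1) => ℤ)).summable_iff.mp (h2.congr fun q => ?_)
      have hc : (Fin.consEquiv fun _ : Fin (k+1) => ℤ) q = Fin.cons q.1 q.2 := rfl
      simp only [Function.comp_apply, hc, Fin.prod_univ_succ, Fin.cons_zero, Fin.cons_succ]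

private lemma mv_eval_bound' {m : ℕ} (q : MvPolynomial (Fin m) ℝ) (x : EuclideanSpace ℝ (Fin m)) :
    |MvPolynomial.eval (fun i => x i) q| ≤
      (∑ s ∈ q.support, |MvPolynomial.coeff s q|) * (1 + ‖x‖) ^ q.totalDegree := by
  have hx : (0:ℝ) ≤ ‖x‖ := norm_nonneg x
  rw [MvPolynomial.eval_eq]
  refine (Finset.abs_sum_le_sum_abs _ _).trans ?_
  rw [Finset.sum_mul]
  apply Finset.sum_le_sum
  intro s hs
  rw [abs_mul]
  refine mul_le_mul_of_nonneg_left ?_ (abs_nonneg _)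
  calc |∏ i ∈ s.support, x i ^ s i| = ∏ i ∈ s.support, |x i| ^ (s i) := by
        rw [Finset.abs_prod]
        exact Finset.prod_congr rfl fun i _ => abs_pow _ _
    _ ≤ ∏ i ∈ s.support, (1 + ‖x‖) ^ (s i) :=
        Finset.prod_le_prod (fun i _ => by positivity)
          (fun i _ => pow_le_pow_left₀ (abs_nonneg _)
            ((coord_le_norm' x i).trans (by linarith)) _)
    _ = (1 + ‖x‖) ^ (∑ i ∈ s.support, s i) := Finset.prod_pow_eq_pow_sum _ _ _
    _ ≤ (1 + ‖x‖) ^ q.totalDegree :=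
        pow_le_pow_right₀ (by linarith) (MvPolynomial.le_totalDegree hs)

theorem stmt8 (m k : ℕ) (f : SchwartzMap (EuclideanSpace ℝ (Fin m)) ℂ)
    (p : EuclideanSpace ℝ (Fin m) → EuclideanSpace ℝ (Fin k))
    (hp : ∀ j : Fin k, ∃ q : MvPolynomial (Fin m) ℝ,
      ∀ x : EuclideanSpace ℝ (Fin m), p x j = MvPolynomial.eval (fun i => x i) q)
    (u : EuclideanSpace ℝ (Fin k) → ℂ) (hu : ContDiff ℝ (⊤ : ℕ∞) u)
    (hu' : HasCompactSupport u) (N : ℕ) :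
    Summable fun α : Fin k → ℤ =>
      ⨆ x : EuclideanSpace ℝ (Fin m),
        (1 + ‖x‖) ^ N *
          ‖f x * u (p x - (EuclideanSpace.equiv (Fin k) ℝ).symm (fun j => (α j : ℝ)))‖ := by
  classical
  choose q hq using hp
  obtain ⟨R₀, hR₀⟩ := hu'.isBounded.subset_closedBall 0
  set R : ℝ := max R₀ 0 with hRdef
  have hR : tsupport u ⊆ Metric.closedBall 0 R :=
    hR₀.trans (Metric.closedBall_subset_closedBall (le_max_left _ _))
  have hR0 : (0:ℝ) ≤ R := le_max_right _ _
  obtain ⟨U, hU⟩ := hu.continuous.bounded_above_of_compact_support hu'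
  have hU0 : 0 ≤ U := (norm_nonneg (u 0)).trans (hU 0)
  set D : ℕ := Finset.univ.sup fun j => (q j).totalDegree with hD
  set B : ℝ := ∑ j, ∑ s ∈ (q j).support, |MvPolynomial.coeff s (q j)| with hB
  have hB0 : 0 ≤ B := Finset.sum_nonneg fun j _ =>
    Finset.sum_nonneg fun s _ => abs_nonneg _
  -- uniform polynomial bound
  have hpb : ∀ (x : EuclideanSpace ℝ (Fin m)) (j : Fin k),
      |p x j| ≤ B * (1 + ‖x‖) ^ D := by
    intro x j
    have h1 : (1:ℝ) ≤ 1 + ‖x‖ := by linarith [norm_nonneg x]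
    have hmv := mv_eval_bound' (q j) x
    rw [← hq j x] at hmv
    refine hmv.trans ?_
    have hCj : (∑ s ∈ (q j).support, |MvPolynomial.coeff s (q j)|) ≤ B :=
      Finset.single_le_sum (f := fun j => ∑ s ∈ (q j).support, |MvPolynomial.coeff s (q j)|)
        (fun i _ => Finset.sum_nonneg fun s _ => abs_nonneg _) (Finset.mem_univ j)
    have hDj : (1 + ‖x‖) ^ (q j).totalDegree ≤ (1 + ‖x‖) ^ D :=
      pow_le_pow_right₀ h1 (Finset.le_sup (f := fun j => (q j).totalDegree) (Finset.mem_univ j))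
    exact mul_le_mul hCj hDj (by positivity) hB0
  set P : ℕ := N + 2 * D * k with hP
  set M : ℝ := 2 ^ P * (Finset.Iic (P, 0)).sup (fun n => SchwartzMap.seminorm ℝ n.1 n.2) f
    with hM
  have hM0 : 0 ≤ M := by
    rw [hM]
    positivity
  have hfM : ∀ x : EuclideanSpace ℝ (Fin m), (1 + ‖x‖) ^ P * ‖f x‖ ≤ M := by
    intro x
    simpa using one_add_le_sup_seminorm_apply (𝕜 := ℝ) (m := (P, 0)) le_rfl le_rfl f x
  set K : ℝ := U * M * (1 + R + B) ^ (2 * k) with hK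
  -- pointwise bound
  have key : ∀ (α : Fin k → ℤ) (x : EuclideanSpace ℝ (Fin m)),
      (1 + ‖x‖) ^ N *
        ‖f x * u (p x - (EuclideanSpace.equiv (Fin k) ℝ).symm (fun j => (α j : ℝ)))‖ ≤
      K * ∏ j, ((1 + |((α j : ℤ) : ℝ)|) ^ 2)⁻¹ := by
    intro α x
    set y : EuclideanSpace ℝ (Fin k) :=
      (EuclideanSpace.equiv (Fin k) ℝ).symm (fun j => (α j : ℝ)) with hy
    have h1 : (1:ℝ) ≤ 1 + ‖x‖ := by linarith [norm_nonneg x]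
    have h1D : (1:ℝ) ≤ (1 + ‖x‖) ^ D := one_le_pow₀ h1
    by_cases hz : u (p x - y) = 0
    · rw [hz, mul_zero, norm_zero, mul_zero]
      have : (0:ℝ) ≤ K := by rw [hK]; positivity
      positivity
    · have hmem : p x - y ∈ Metric.closedBall (0 : EuclideanSpace ℝ (Fin k)) R :=
        hR (subset_tsupport u (by simpa [Function.mem_support] using hz))
      have hnorm : ‖p x - y‖ ≤ R := by
        simpa [Metric.mem_closedBall, dist_zero_right] using hmem
      have hcoord : ∀ j, 1 + |((α j : ℤ) : ℝ)| ≤ (1 + R + B) * (1 + ‖x‖) ^ D := by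
        intro j
        have hyj : y j = ((α j : ℤ) : ℝ) := rfl
        have hsub : (p x - y) j = p x j - y j := rfl
        have hc := coord_le_norm' (p x - y) j
        rw [hsub, hyj] at hc
        have h2 : |p x j - ((α j : ℤ) : ℝ)| ≤ R := hc.trans hnorm
        have h3 := hpb x j
        have habs : |((α j : ℤ) : ℝ)| - |p x j| ≤ |p x j - ((α j : ℤ) : ℝ)| := by
          rw [abs_sub_comm]
          exact abs_sub_abs_le_abs_sub _ _
        nlinarith [hB0, hR0]
      have hprod : (∏ j, (1 + |((α j : ℤ) : ℝ)|) ^ 2) ≤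
          (1 + R + B) ^ (2 * k) * (1 + ‖x‖) ^ (2 * D * k) := by
        have hc : (∏ j, (1 + |((α j : ℤ) : ℝ)|) ^ 2) ≤
            ∏ _j : Fin k, ((1 + R + B) * (1 + ‖x‖) ^ D) ^ 2 :=
          Finset.prod_le_prod (fun j _ => by positivity)
            (fun j _ => pow_le_pow_left₀ (by positivity) (hcoord j) 2)
        refine hc.trans (le_of_eq ?_)
        rw [Finset.prod_const, Finset.card_univ, Fintype.card_fin, ← pow_mul, mul_pow,
          ← pow_mul]
        have e : D * (2 * k) = 2 * D * k := by ring
        rw [e]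
      have hQpos : (0:ℝ) < ∏ j, (1 + |((α j : ℤ) : ℝ)|) ^ 2 :=
        Finset.prod_pos fun j _ => by positivity
      have hinv : (∏ j, ((1 + |((α j : ℤ) : ℝ)|) ^ 2)⁻¹) =
          (∏ j, (1 + |((α j : ℤ) : ℝ)|) ^ 2)⁻¹ := by
        rw [Finset.prod_inv_distrib]
      rw [hinv, ← div_eq_mul_inv, le_div_iff₀ hQpos]
      have hnormmul : ‖f x * u (p x - y)‖ = ‖f x‖ * ‖u (p x - y)‖ := norm_mul _ _
      calc (1 + ‖x‖) ^ N * ‖f x * u (p x - y)‖ * ∏ j, (1 + |((α j : ℤ) : ℝ)|) ^ 2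
          ≤ ((1 + ‖x‖) ^ N * (‖f x‖ * U)) *
            ((1 + R + B) ^ (2 * k) * (1 + ‖x‖) ^ (2 * D * k)) := by
            apply mul_le_mul _ hprod hQpos.le (by positivity)
            rw [hnormmul]
            exact mul_le_mul_of_nonneg_left
              (mul_le_mul_of_nonneg_left (hU _) (norm_nonneg _)) (by positivity)
        _ ≤ K := by
            have hfx := hfM x
            have hre : (1 + ‖x‖) ^ N * (‖f x‖ * U) *
                ((1 + R + B) ^ (2 * k) * (1 + ‖x‖) ^ (2 * D * k))
                = U * ((1 + ‖x‖) ^ P * ‖f x‖) * (1 + R + B) ^ (2 * k) := by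
              rw [hP, pow_add]
              ring
            rw [hre, hK]
            apply mul_le_mul_of_nonneg_right _ (by positivity)
            exact mul_le_mul_of_nonneg_left hfx hU0
  -- summability
  have hg : Summable fun α : Fin k → ℤ => K * ∏ j, ((1 + |((α j : ℤ) : ℝ)|) ^ 2)⁻¹ :=
    (summable_pi_prod' _ summable_gz' (fun n => by positivity) k).mul_left K
  refine hg.of_nonneg_of_le (fun α => Real.iSup_nonneg fun x => by positivity) fun α => ?_
  exact ciSup_le fun x => key α x
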